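/- arXiv:1710.07525 — 2 statements merged into one kernel-verified Lean document; each statement's English description precedes it below -/
import Mathlib

section
/- Let F be an orthogonal (projection-valued) measure on a half-open interval [a,b) with values in B(H), and let Ω, Ω₁ : [a,b) → B(H) be such that the operator-spectral integrals ∫ Ω₁(λ) F(dλ) and ∫ Ω(λ) F(dλ) exist (as norm limits of Riemann–Stieltjes sums) and Ω satisfies the commutation relation Ω(λ)F(δ) = F(δ)Ω(λ)F(δ) for every Borel set δ ⊆ [a,b) and every λ. Then the integral ∫ Ω₁(λ)Ω(λ) F(dλ) exists and equals (∫ Ω₁(λ) F(dλ)) · (∫ Ω(μ) F(dμ)). -/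
/-!
On a single tagged partition the Riemann–Stieltjes sums multiply exactly:
`(∑ Ω₁(xᵢ)F(Δᵢ)) (∑ Ω(xⱼ)F(Δⱼ)) = ∑ Ω₁(xᵢ)Ω(xᵢ)F(Δᵢ)`. Indeed the commutation relation rewrites
`Ω(xⱼ)F(Δⱼ)` as `F(Δⱼ)Ω(xⱼ)F(Δⱼ)`, and for `i ≠ j` the factor `F(Δᵢ)F(Δⱼ) = F(∅)` appears. The
projection `F(∅)` need not vanish, but `Ω₁(λ)F(∅) = 0` on `[a,b)`: right-multiplied by `F(∅)`, a
Riemann–Stieltjes sum becomes `∑ Ω₁(xᵢ)F(∅)`, and splitting one interval of a fine partition adds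
the single term `Ω₁(λ)F(∅)` while both sums tend to `J₁F(∅)`. The theorem is then continuity of
multiplication along the filter of tagged partitions with mesh tending to `0`.
-/
open scoped InnerProductSpace

variable {H : Type*} [NormedAddCommGroup H] [InnerProductSpace ℂ H] [CompleteSpace H]

/-- The Riemann–Stieltjes sum `∑ Ω(x_m) F(Δ_m)` of an operator-valued function `Ω` with respect
to an operator-valued measure `F`, for the partition `pts` of an interval with tags `tags`. -/
noncomputable def RSsum (F : Set ℝ → (H →L[ℂ] H)) (Ω : ℝ → (H →L[ℂ] H)) {n : ℕ}
    (pts : Fin (n + 1) → ℝ) (tags : Fin n → ℝ) : H →L[ℂ] H :=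
  ∑ i : Fin n, (Ω (tags i)) ∘L (F (Set.Ico (pts i.castSucc) (pts i.succ)))

/-- `IsRSIntegral a b F Ω J` means that the operator-spectral integral `∫_{[a,b)} Ω(λ) F(dλ)`
exists and equals `J`, i.e. the Riemann–Stieltjes sums converge in operator norm to `J`
as the mesh of the partition tends to `0`, independently of the choice of tags. -/
def IsRSIntegral (a b : ℝ) (F : Set ℝ → (H →L[ℂ] H)) (Ω : ℝ → (H →L[ℂ] H))
    (J : H →L[ℂ] H) : Prop :=
  ∀ ε > 0, ∃ δ > 0, ∀ (n : ℕ) (pts : Fin (n + 1) → ℝ) (tags : Fin n → ℝ),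
    pts 0 = a → pts (Fin.last n) = b → StrictMono pts →
    (∀ i : Fin n, tags i ∈ Set.Ico (pts i.castSucc) (pts i.succ)) →
    (∀ i : Fin n, pts i.succ - pts i.castSucc < δ) →
    ‖RSsum F Ω pts tags - J‖ < ε

open Filter Function Topology Set

theorem Finset.sum_mul_sum_of_orthogonal {ι R : Type*} [NonUnitalSemiring R] (s : Finset ι)
    (A B P : ι → R) (hB : ∀ j ∈ s, B j * P j = P j * (B j * P j))
    (horth : ∀ i ∈ s, ∀ j ∈ s, i ≠ j → A i * P i * P j = 0) :
    (∑ i ∈ s, A i * P i) * ∑ j ∈ s, B j * P j = ∑ i ∈ s, A i * B i * P i := by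
  rw [Finset.sum_mul_sum]
  refine Finset.sum_congr rfl fun i hi => ?_
  rw [Finset.sum_eq_single_of_mem i hi fun j hj hji => ?_, mul_assoc, ← hB i hi, mul_assoc]
  rw [hB j hj, ← mul_assoc, horth i hi j hj hji.symm, zero_mul]

namespace Fin

theorem exists_mem_Ico_of_monotone {α : Type*} [LinearOrder α] {n : ℕ}
    {f : Fin (n + 1) → α} (hf : Monotone f) {x : α} (hx : x ∈ Ico (f 0) (f (last n))) :
    ∃ i : Fin n, x ∈ Ico (f i.castSucc) (f i.succ) := by
  induction n with
  | zero => exact absurd hx.2 hx.1.not_gt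
  | succ n ih =>
    by_cases h : x < f (last n).castSucc
    · obtain ⟨i, hi⟩ := ih (hf.comp strictMono_castSucc.monotone) ⟨hx.1, h⟩
      exact ⟨i.castSucc, hi⟩
    · exact ⟨last n, le_of_not_gt h, hx.2⟩

theorem succAbove_castSucc_succ_of_ne {n : ℕ} {i k : Fin n} (h : i ≠ k) :
    k.castSucc.succ.succAbove i.castSucc = (k.castSucc.succAbove i).castSucc ∧
      k.castSucc.succ.succAbove i.succ = (k.castSucc.succAbove i).succ := by
  rcases h.lt_or_gt with h | h
  · rw [succAbove_castSucc_of_lt _ _ h, succAbove_succ_of_le _ _ (castSucc_le_castSucc_iff.2 h.le),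
      succAbove_succ_of_le _ _ (succ_le_castSucc_iff.2 h), succ_castSucc]
    exact ⟨rfl, rfl⟩
  · have hlt : k.castSucc < i.castSucc := castSucc_lt_castSucc_iff.2 h
    rw [succAbove_castSucc_of_le _ _ h.le, succAbove_succ_of_lt _ _ hlt,
      succAbove_succ_of_lt _ _ (hlt.trans castSucc_lt_succ), succ_castSucc]
    exact ⟨rfl, rfl⟩

end Fin

structure TaggedPartition where
  n : ℕ
  pts : Fin (n + 1) → ℝ
  tags : Fin n → ℝ

namespace TaggedPartition

structure IsPartition (P : TaggedPartition) (a b : ℝ) : Prop where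
  pts_zero : P.pts 0 = a
  pts_last : P.pts (Fin.last P.n) = b
  strictMono : StrictMono P.pts
  tags_mem : ∀ i, P.tags i ∈ Ico (P.pts i.castSucc) (P.pts i.succ)

def MeshLT (P : TaggedPartition) (δ : ℝ) : Prop :=
  ∀ i : Fin P.n, P.pts i.succ - P.pts i.castSucc < δ

variable {P : TaggedPartition} {a b : ℝ}

lemma IsPartition.Ico_subset (hP : P.IsPartition a b) (i : Fin P.n) :
    Ico (P.pts i.castSucc) (P.pts i.succ) ⊆ Ico a b :=
  Ico_subset_Ico (hP.pts_zero ▸ hP.strictMono.monotone (Fin.zero_le _))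
    (hP.pts_last ▸ hP.strictMono.monotone (Fin.le_last _))

lemma IsPartition.tags_mem_Ico (hP : P.IsPartition a b) (i : Fin P.n) : P.tags i ∈ Ico a b :=
  hP.Ico_subset i (hP.tags_mem i)

lemma IsPartition.pairwise_disjoint (hP : P.IsPartition a b) :
    Pairwise (Disjoint on fun i : Fin P.n => Ico (P.pts i.castSucc) (P.pts i.succ)) := by
  refine (pairwise_disjoint_on _).2 fun i j hij => disjoint_left.2 fun x hi hj => ?_
  exact (hi.2.trans_le (hP.strictMono.monotone (Fin.succ_le_castSucc_iff.2 hij))).not_ge hj.1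

-- Merges the intervals `k` and `k + 1`, keeping the tag of `k + 1`.
lemma IsPartition.merge {n : ℕ} {pts : Fin (n + 2) → ℝ} {tags : Fin (n + 1) → ℝ} {δ : ℝ}
    (hP : IsPartition ⟨n + 1, pts, tags⟩ a b) (hmesh : MeshLT ⟨n + 1, pts, tags⟩ δ) (k : Fin n) :
    IsPartition ⟨n, pts ∘ k.castSucc.succ.succAbove, tags ∘ k.castSucc.succAbove⟩ a b ∧
      MeshLT ⟨n, pts ∘ k.castSucc.succ.succAbove, tags ∘ k.castSucc.succAbove⟩ (2 * δ) := by
  have hmono : StrictMono pts := hP.strictMono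
  refine ⟨⟨?_, ?_, hmono.comp (Fin.strictMono_succAbove _), fun i => ?_⟩, fun i => ?_⟩
  · simpa [Fin.succAbove_ne_zero_zero (Fin.succ_ne_zero _)] using hP.pts_zero
  · simpa [Fin.succAbove_ne_last_last ((Fin.succ_ne_last_iff _).2 (Fin.castSucc_lt_last k).ne)]
      using hP.pts_last
  · show tags _ ∈ Ico (pts _) (pts _)
    by_cases hik : i = k
    · rw [hik, Fin.succAbove_castSucc_self, Fin.succAbove_succ_self,
        Fin.succAbove_succ_of_lt _ _ Fin.castSucc_lt_succ]
      exact Ico_subset_Ico_left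
        (hmono.monotone (Fin.castSucc_le_castSucc_iff.2 Fin.castSucc_lt_succ.le))
        (hP.tags_mem k.succ)
    · obtain ⟨h₁, h₂⟩ := Fin.succAbove_castSucc_succ_of_ne hik
      rw [h₁, h₂]
      exact hP.tags_mem _
  · show pts _ - pts _ < 2 * δ
    by_cases hik : i = k
    · rw [hik, Fin.succAbove_succ_self, Fin.succAbove_succ_of_lt _ _ Fin.castSucc_lt_succ]
      have h₁ := hmesh k.castSucc
      have h₂ := hmesh k.succ
      simp only [Fin.succ_castSucc] at h₁ h₂ ⊢
      linarith
    · obtain ⟨h₁, h₂⟩ := Fin.succAbove_castSucc_succ_of_ne hik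
      rw [h₁, h₂]
      have hpos := sub_pos.2 (hmono (Fin.castSucc_lt_succ (i := k.castSucc.succAbove i)))
      linarith [hmesh (k.castSucc.succAbove i)]

-- `k : Fin n` forces the interval tagged `l` not to be the last one, so that it can be merged.
lemma exists_isPartition_tags_castSucc_eq {l δ : ℝ} (hl : l ∈ Ico a b) (hδ : 0 < δ) :
    ∃ (n : ℕ) (pts : Fin (n + 2) → ℝ) (tags : Fin (n + 1) → ℝ) (k : Fin n),
      IsPartition ⟨n + 1, pts, tags⟩ a b ∧ MeshLT ⟨n + 1, pts, tags⟩ δ ∧ tags k.castSucc = l := by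
  have hη : 0 < min δ (b - l) := lt_min hδ (sub_pos.2 hl.2)
  obtain ⟨n, hn⟩ := exists_nat_gt ((b - a) / min δ (b - l))
  set h := (b - a) / (n + 1) with hh
  have hh_pos : 0 < h := div_pos (by linarith [hl.1, hl.2]) (by positivity)
  have hh_lt : h < min δ (b - l) := by
    rw [div_lt_iff₀ hη] at hn
    rw [hh, div_lt_iff₀ (by positivity)]
    nlinarith
  set pts : Fin (n + 2) → ℝ := fun i => a + i * h with hpts
  have hmono : StrictMono pts := fun i j hij => by
    simp only [hpts]
    gcongr
    exact_mod_cast hij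
  have hlast : pts (Fin.last (n + 1)) = b := by
    simp only [hpts, Fin.val_last, hh]
    push_cast
    field_simp
    ring
  obtain ⟨k, hk⟩ := Fin.exists_mem_Ico_of_monotone
    (hmono.monotone.comp Fin.strictMono_castSucc.monotone) (x := l)
    ⟨by simpa [hpts] using hl.1, by
      have : pts (Fin.last n).castSucc = b - h := by
        rw [← hlast]
        simp only [hpts, Fin.val_castSucc, Fin.val_last]
        push_cast
        ring
      simp only [Function.comp, this]
      linarith [min_le_right δ (b - l)]⟩
  refine ⟨n, pts, update (fun i => pts i.castSucc) k.castSucc l, k,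
    ⟨by simp [hpts], hlast, hmono, fun i => ?_⟩, fun i => ?_, update_self ..⟩
  · show update (fun i => pts i.castSucc) k.castSucc l i ∈ Ico (pts _) (pts _)
    by_cases hi : i = k.castSucc
    · subst hi
      simpa using hk
    · rw [update_of_ne hi]
      exact ⟨le_rfl, hmono (Fin.castSucc_lt_succ (i := i))⟩
  · show pts _ - pts _ < δ
    simp only [hpts, Fin.val_succ, Fin.val_castSucc]
    push_cast
    linarith [min_le_left δ (b - l)]

end TaggedPartition

open TaggedPartition

def riemannFilter (a b : ℝ) : Filter TaggedPartition :=
  ⨅ δ > 0, 𝓟 {P | P.IsPartition a b ∧ P.MeshLT δ}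

lemma hasBasis_riemannFilter (a b : ℝ) :
    (riemannFilter a b).HasBasis (fun δ => 0 < δ)
      fun δ => {P | P.IsPartition a b ∧ P.MeshLT δ} :=
  hasBasis_biInf_principal'
    (fun δ₁ h₁ δ₂ h₂ => ⟨min δ₁ δ₂, lt_min h₁ h₂,
      fun _ hP => ⟨hP.1, fun i => (hP.2 i).trans_le (min_le_left _ _)⟩,
      fun _ hP => ⟨hP.1, fun i => (hP.2 i).trans_le (min_le_right _ _)⟩⟩)
    ⟨1, one_pos⟩

lemma eventually_isPartition (a b : ℝ) : ∀ᶠ P in riemannFilter a b, P.IsPartition a b :=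
  (hasBasis_riemannFilter a b).eventually_iff.2 ⟨1, one_pos, fun _ hP => hP.1⟩

section Operator

variable {E : Type*} [NormedAddCommGroup E] [InnerProductSpace ℂ E] {a b : ℝ}
  {F : Set ℝ → (E →L[ℂ] E)} {Ω : ℝ → (E →L[ℂ] E)} {J : E →L[ℂ] E}

lemma isRSIntegral_iff_tendsto :
    IsRSIntegral a b F Ω J ↔
      Tendsto (fun P : TaggedPartition => RSsum F Ω P.pts P.tags) (riemannFilter a b) (𝓝 J) := by
  simp only [(hasBasis_riemannFilter a b).tendsto_iff Metric.nhds_basis_ball, Metric.mem_ball,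
    dist_eq_norm, mem_ofPred_eq]
  refine forall₂_congr fun ε _ => exists_congr fun δ => and_congr_right fun _ => ?_
  exact ⟨fun h P ⟨hP, hmesh⟩ => h _ _ _ hP.1 hP.2 hP.3 hP.4 hmesh,
    fun h n pts tags h0 hlast hmono htags hmesh =>
      h ⟨n, pts, tags⟩ ⟨⟨h0, hlast, hmono, htags⟩, hmesh⟩⟩

lemma RSsum_comp_empty (hFmul : ∀ δ₁ δ₂ : Set ℝ, F δ₁ ∘L F δ₂ = F (δ₁ ∩ δ₂)) {n : ℕ}
    (pts : Fin (n + 1) → ℝ) (tags : Fin n → ℝ) :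
    RSsum F Ω pts tags ∘L F ∅ = ∑ i, Ω (tags i) ∘L F ∅ := by
  have hF : ∀ δ, F δ ∘L F ∅ = F ∅ := fun δ => by rw [hFmul, inter_empty]
  change (∑ i, Ω (tags i) * F _) * F ∅ = _
  simp only [Finset.sum_mul, mul_assoc]
  exact Finset.sum_congr rfl fun i _ => congrArg (Ω (tags i) ∘L ·) (hF _)

lemma comp_empty_eq_zero_of_tendsto (hFmul : ∀ δ₁ δ₂ : Set ℝ, F δ₁ ∘L F δ₂ = F (δ₁ ∩ δ₂))
    (hΩ : Tendsto (fun P : TaggedPartition => RSsum F Ω P.pts P.tags) (riemannFilter a b) (𝓝 J))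
    {l : ℝ} (hl : l ∈ Ico a b) : Ω l ∘L F ∅ = 0 := by
  have hlim : Tendsto (fun P : TaggedPartition => ∑ i, Ω (P.tags i) ∘L F ∅) (riemannFilter a b)
      (𝓝 (J ∘L F ∅)) :=
    (hΩ.mul_const (F ∅)).congr fun P => RSsum_comp_empty hFmul P.pts P.tags
  refine norm_le_zero_iff.1 (le_of_forall_pos_le_add fun ε hε => ?_)
  obtain ⟨δ, hδ, hfine⟩ := ((hasBasis_riemannFilter a b).tendsto_iff Metric.nhds_basis_ball).1
    hlim (ε / 2) (half_pos hε)
  obtain ⟨n, pts, tags, k, hP, hmesh, hk⟩ := exists_isPartition_tags_castSucc_eq hl (half_pos hδ)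
  obtain ⟨hP', hmesh'⟩ := hP.merge hmesh k
  rw [mul_div_cancel₀ _ two_ne_zero] at hmesh'
  have h₁ := hfine _ ⟨hP, fun i => (hmesh i).trans (half_lt_self hδ)⟩
  have h₂ := hfine _ ⟨hP', hmesh'⟩
  simp only [Metric.mem_ball, Function.comp_apply] at h₁ h₂
  have : Ω l ∘L F ∅ =
      ∑ i, Ω (tags i) ∘L F ∅ - ∑ i, Ω (tags (k.castSucc.succAbove i)) ∘L F ∅ := by
    rw [Fin.sum_univ_succAbove _ k.castSucc, hk, add_sub_cancel_right]
  rw [this, ← dist_eq_norm]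
  linarith [dist_triangle_right (∑ i, Ω (tags i) ∘L F ∅)
    (∑ i, Ω (tags (k.castSucc.succAbove i)) ∘L F ∅) (J ∘L F ∅)]

lemma RSsum_comp_RSsum {Ω₁ : ℝ → (E →L[ℂ] E)} {P : TaggedPartition}
    (hFmul : ∀ δ₁ δ₂ : Set ℝ, F δ₁ ∘L F δ₂ = F (δ₁ ∩ δ₂))
    (hΩ₁ : ∀ l ∈ Ico a b, Ω₁ l ∘L F ∅ = 0)
    (hcomm : ∀ δ : Set ℝ, δ ⊆ Ico a b → ∀ l ∈ Ico a b, Ω l ∘L F δ = F δ ∘L (Ω l ∘L F δ))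
    (hP : P.IsPartition a b) :
    RSsum F Ω₁ P.pts P.tags ∘L RSsum F Ω P.pts P.tags =
      RSsum F (fun l => Ω₁ l ∘L Ω l) P.pts P.tags :=
  Finset.sum_mul_sum_of_orthogonal _ _ _ _
    (fun j _ => hcomm _ (hP.Ico_subset j) _ (hP.tags_mem_Ico j))
    fun i _ j _ hij => by
      rw [mul_assoc]
      change Ω₁ _ ∘L (F _ ∘L F _) = 0
      rw [hFmul, (hP.pairwise_disjoint hij).inter_eq, hΩ₁ _ (hP.tags_mem_Ico i)]

end Operator

theorem stmt_2_general (a b : ℝ) (F : Set ℝ → (H →L[ℂ] H))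
    (hFmul : ∀ δ₁ δ₂ : Set ℝ, F δ₁ ∘L F δ₂ = F (δ₁ ∩ δ₂))
    (Ω Ω₁ : ℝ → (H →L[ℂ] H)) (J J₁ : H →L[ℂ] H)
    (hΩ₁ : IsRSIntegral a b F Ω₁ J₁) (hΩ : IsRSIntegral a b F Ω J)
    (hcomm : ∀ δ : Set ℝ, δ ⊆ Set.Ico a b → ∀ l ∈ Set.Ico a b,
      Ω l ∘L F δ = F δ ∘L (Ω l ∘L F δ)) :
    IsRSIntegral a b F (fun l => Ω₁ l ∘L Ω l) (J₁ ∘L J) := by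
  rw [isRSIntegral_iff_tendsto] at hΩ₁ hΩ ⊢
  have hΩ₁F : ∀ l ∈ Ico a b, Ω₁ l ∘L F ∅ = 0 := fun l hl =>
    comp_empty_eq_zero_of_tendsto hFmul hΩ₁ hl
  refine (hΩ₁.mul hΩ).congr' ?_
  filter_upwards [eventually_isPartition a b] with P hP
  exact RSsum_comp_RSsum hFmul hΩ₁F hcomm hP

/-- If `F` is an orthogonal (projection-valued) operator measure on `[a,b)`, the operator-spectral
integrals of `Ω₁` and `Ω` exist, and `Ω` satisfies the commutation relation
`Ω(λ)F(δ) = F(δ)Ω(λ)F(δ)` (i.e. `Ω` is `F`-admissible), then the integral of `Ω₁·Ω` exists and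
`∫ Ω₁(λ)Ω(λ) F(dλ) = (∫ Ω₁(λ) F(dλ)) (∫ Ω(μ) F(dμ))`. -/
theorem stmt_2 (a b : ℝ) (hab : a < b) (F : Set ℝ → (H →L[ℂ] H))
    (hFsa : ∀ δ : Set ℝ, IsSelfAdjoint (F δ))
    (hFmul : ∀ δ₁ δ₂ : Set ℝ, F δ₁ ∘L F δ₂ = F (δ₁ ∩ δ₂))
    (Ω Ω₁ : ℝ → (H →L[ℂ] H)) (J J₁ : H →L[ℂ] H)
    (hΩ₁ : IsRSIntegral a b F Ω₁ J₁) (hΩ : IsRSIntegral a b F Ω J)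
    (hcomm : ∀ δ : Set ℝ, δ ⊆ Set.Ico a b → ∀ l ∈ Set.Ico a b,
      Ω l ∘L F δ = F δ ∘L (Ω l ∘L F δ)) :
    IsRSIntegral a b F (fun l => Ω₁ l ∘L Ω l) (J₁ ∘L J) :=
  stmt_2_general a b F hFmul Ω Ω₁ J J₁ hΩ₁ hΩ hcomm
end

section
/- Let F be a projection-valued measure on [a,b), X : [a,b) → B(H) as above with values self-adjoint in [c₁,c₂]·I, and let p be a polynomial. Then for every partition Z = {Δ_m} of [a,b) with sample points x_m, the Riemann–Stieltjes sum satisfies ‖Σ_m (φ(X(x_m)) − p(X(x_m))) F(Δ_m) f‖² = Σ_m ‖(φ−p)(X(x_m)) F(Δ_m) f‖² ≤ ‖φ−p‖_∞² ‖f‖² for every f ∈ H and every continuous φ on [c₁,c₂]. -/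
open scoped InnerProductSpace ContinuousFunctionalCalculus

section AuxLemmas
variable {H : Type*} [NormedAddCommGroup H] [InnerProductSpace ℂ H]

/-- If `c` commutes with a self-adjoint `a`, then `c` commutes with `cfc f a`. -/
lemma stmt5_commute_cfc [CompleteSpace H] {a c : H →L[ℂ] H} (ha : IsSelfAdjoint a)
    (hc : Commute c a) (f : ℝ → ℝ) : Commute c (cfc f a) := by
  by_cases hf : ContinuousOn f (spectrum ℝ a)
  · rw [cfc_apply f a ha hf]
    generalize (⟨_, hf.restrict⟩ : C(spectrum ℝ a, ℝ)) = g
    induction g using ContinuousMap.induction_on_of_compact with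
    | const r =>
      have : (ContinuousMap.const (spectrum ℝ a) r) = algebraMap ℝ C(spectrum ℝ a, ℝ) r := rfl
      rw [this, AlgHomClass.commutes]
      exact (Algebra.commutes r c).symm
    | id => rw [cfcHom_id ha]; exact hc
    | star_id => rw [star_trivial, cfcHom_id ha]; exact hc
    | add f g hf hg => rw [map_add]; exact hf.add_right hg
    | mul f g hf hg => rw [map_mul]; exact hf.mul_right hg
    | frequently g hg =>
      have hcl : IsClosed {g : C(spectrum ℝ a, ℝ) | Commute c (cfcHom ha g)} := by
        have hcont : Continuous (cfcHom ha (R := ℝ)) := (cfcHom_isClosedEmbedding ha).continuous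
        exact isClosed_eq (continuous_const.mul hcont) (hcont.mul continuous_const)
      exact hcl.closure_subset (mem_closure_iff_frequently.mpr hg)
  · rw [cfc_apply_of_not_continuousOn a hf]
    exact Commute.zero_right c

/-- Pythagoras for finitely many pairwise orthogonal vectors. -/
lemma stmt5_pythagoras {n : ℕ} (v : Fin n → H) (hv : ∀ i j, i ≠ j → ⟪v i, v j⟫_ℂ = 0) :
    ‖∑ i, v i‖ ^ 2 = ∑ i, ‖v i‖ ^ 2 := by
  have h : ⟪∑ i, v i, ∑ j, v j⟫_ℂ = ∑ i, ⟪v i, v i⟫_ℂ := by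
    rw [sum_inner]
    refine Finset.sum_congr rfl fun i _ => ?_
    rw [inner_sum, Finset.sum_eq_single i]
    · exact fun j _ hj => hv i j (Ne.symm hj)
    · exact fun h => absurd (Finset.mem_univ i) h
  calc ‖∑ i, v i‖ ^ 2 = RCLike.re ⟪∑ i, v i, ∑ j, v j⟫_ℂ :=
        (inner_self_eq_norm_sq (𝕜 := ℂ) _).symm
    _ = RCLike.re (∑ i, ⟪v i, v i⟫_ℂ) := by rw [h]
    _ = ∑ i, RCLike.re ⟪v i, v i⟫_ℂ := by rw [map_sum]
    _ = ∑ i, ‖v i‖ ^ 2 := Finset.sum_congr rfl fun i _ => inner_self_eq_norm_sq (𝕜 := ℂ) _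

/-- A self-adjoint idempotent is a contraction. -/
lemma stmt5_contraction [CompleteSpace H] (P : H →L[ℂ] H) (hP : IsSelfAdjoint P)
    (hP2 : P * P = P) (f : H) : ‖P f‖ ≤ ‖f‖ := by
  have hadj : ContinuousLinearMap.adjoint P = P := ContinuousLinearMap.isSelfAdjoint_iff'.mp hP
  have h1 : ⟪P f, P f⟫_ℂ = ⟪f, P f⟫_ℂ := by
    rw [← hadj, ContinuousLinearMap.adjoint_inner_left, hadj]
    have : P (P f) = (P * P) f := rfl
    rw [this, hP2]
  have h2 : (‖P f‖ : ℝ) ^ 2 ≤ ‖f‖ * ‖P f‖ := by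
    calc ‖P f‖ ^ 2 = RCLike.re ⟪P f, P f⟫_ℂ := (inner_self_eq_norm_sq (𝕜 := ℂ) _).symm
      _ = RCLike.re ⟪f, P f⟫_ℂ := by rw [h1]
      _ ≤ ‖(⟪f, P f⟫_ℂ)‖ := RCLike.re_le_norm _
      _ ≤ ‖f‖ * ‖P f‖ := norm_inner_le_norm (𝕜 := ℂ) f (P f)
  rcases eq_or_lt_of_le (norm_nonneg (P f)) with h0 | h0
  · rw [← h0]; exact norm_nonneg f
  · rw [pow_two] at h2
    exact le_of_mul_le_mul_right h2 h0

end AuxLemmas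

/-- Riemann–Stieltjes sum estimate: if `F` is an orthogonal projection-valued measure,
`X(λ)` are self-adjoint with spectrum in `[c₁,c₂]` and `F`-admissible (commutation relation),
`φ` is continuous on `[c₁,c₂]`, `p` is a polynomial and `M` dominates `|φ - p|` on `[c₁,c₂]`
(e.g. `M = ‖φ - p‖_∞`), then for any family of pairwise disjoint sets `Δ_m ⊆ [a,b)` and sample
points `x_m ∈ [a,b)` and any `f`,
`‖∑ (φ(X(x_m)) − p(X(x_m))) F(Δ_m) f‖² = ∑ ‖(φ−p)(X(x_m)) F(Δ_m) f‖² ≤ M² ‖f‖²`. -/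
theorem stmt_5 {H : Type*} [NormedAddCommGroup H] [InnerProductSpace ℂ H] [CompleteSpace H]
    (a b : ℝ) (hab : a < b) (c₁ c₂ : ℝ) (hc : c₁ ≤ c₂)
    (F : Set ℝ → (H →L[ℂ] H))
    (hFsa : ∀ δ : Set ℝ, IsSelfAdjoint (F δ))
    (hFmul : ∀ δ₁ δ₂ : Set ℝ, F δ₁ ∘L F δ₂ = F (δ₁ ∩ δ₂))
    (hFempty : F ∅ = 0)
    (X : ℝ → (H →L[ℂ] H)) (hXsa : ∀ l, IsSelfAdjoint (X l))
    (hspec : ∀ l ∈ Set.Ico a b, spectrum ℝ (X l) ⊆ Set.Icc c₁ c₂)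
    (hcomm : ∀ δ : Set ℝ, δ ⊆ Set.Ico a b → ∀ l ∈ Set.Ico a b,
      X l ∘L F δ = F δ ∘L (X l ∘L F δ))
    (n : ℕ) (Δ : Fin n → Set ℝ) (hΔsub : ∀ m, Δ m ⊆ Set.Ico a b)
    (hdisj : ∀ m m' : Fin n, m ≠ m' → Δ m ∩ Δ m' = ∅)
    (x : Fin n → ℝ) (hx : ∀ m, x m ∈ Set.Ico a b)
    (φ : ℝ → ℝ) (hφ : ContinuousOn φ (Set.Icc c₁ c₂))
    (p : Polynomial ℝ) (M : ℝ)
    (hM : ∀ t ∈ Set.Icc c₁ c₂, |φ t - p.eval t| ≤ M) (f : H) :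
    ‖∑ m : Fin n, ((cfc φ (X (x m)) - cfc (fun t => p.eval t) (X (x m))) ∘L F (Δ m)) f‖ ^ 2
        = ∑ m : Fin n,
          ‖((cfc φ (X (x m)) - cfc (fun t => p.eval t) (X (x m))) ∘L F (Δ m)) f‖ ^ 2 ∧
      (∑ m : Fin n,
          ‖((cfc φ (X (x m)) - cfc (fun t => p.eval t) (X (x m))) ∘L F (Δ m)) f‖ ^ 2)
        ≤ M ^ 2 * ‖f‖ ^ 2 := by
  have hM0 : 0 ≤ M := le_trans (abs_nonneg _) (hM c₁ ⟨le_rfl, hc⟩)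
  set A : Fin n → (H →L[ℂ] H) := fun m => cfc (fun t => φ t - p.eval t) (X (x m)) with hA
  -- rewrite the difference of cfc's as a single cfc
  have hAeq : ∀ m : Fin n,
      cfc φ (X (x m)) - cfc (fun t => p.eval t) (X (x m)) = A m := by
    intro m
    rw [hA]
    exact (cfc_sub φ (fun t => p.eval t) (X (x m))
      (hφ.mono (hspec _ (hx m))) ((Polynomial.continuous p).continuousOn)).symm
  -- basic multiplication facts about F
  have hFmul' : ∀ δ₁ δ₂ : Set ℝ, F δ₁ * F δ₂ = F (δ₁ ∩ δ₂) := hFmul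
  -- each F (Δ j) commutes with each X (x i)
  have hXFcomm : ∀ i j : Fin n, Commute (F (Δ j)) (X (x i)) := by
    intro i j
    have h1 : X (x i) * F (Δ j) = F (Δ j) * (X (x i) * F (Δ j)) :=
      hcomm (Δ j) (hΔsub j) (x i) (hx i)
    have h2 : F (Δ j) * X (x i) = F (Δ j) * X (x i) * F (Δ j) := by
      have h3 := congrArg star h1
      rwa [star_mul, star_mul, star_mul, (hFsa _).star_eq, (hXsa _).star_eq] at h3
    calc F (Δ j) * X (x i) = F (Δ j) * X (x i) * F (Δ j) := h2
      _ = F (Δ j) * (X (x i) * F (Δ j)) := mul_assoc _ _ _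
      _ = X (x i) * F (Δ j) := h1.symm
  -- hence F (Δ j) commutes with A i
  have hAcomm : ∀ i j : Fin n, Commute (F (Δ j)) (A i) := fun i j =>
    stmt5_commute_cfc (hXsa _) (hXFcomm i j) _
  have hAsa : ∀ m : Fin n, IsSelfAdjoint (A m) := fun m => cfc_predicate _ _
  -- key vanishing product
  have hzero : ∀ i j : Fin n, i ≠ j → (F (Δ i) ∘L A i) ∘L (A j ∘L F (Δ j)) = 0 := by
    intro i j hij
    show F (Δ i) * A i * (A j * F (Δ j)) = 0
    calc F (Δ i) * A i * (A j * F (Δ j))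
        = A i * F (Δ i) * (A j * F (Δ j)) := by rw [(hAcomm i i).eq]
      _ = A i * (A j * (F (Δ i) * F (Δ j))) := by
          rw [mul_assoc, ← mul_assoc (F (Δ i)), (hAcomm j i).eq, mul_assoc]
      _ = 0 := by rw [hFmul', hdisj i j hij, hFempty, mul_zero, mul_zero]
  -- orthogonality of the summands
  have horth : ∀ i j : Fin n, i ≠ j →
      ⟪(A i ∘L F (Δ i)) f, (A j ∘L F (Δ j)) f⟫_ℂ = 0 := by
    intro i j hij
    have hBadj : ContinuousLinearMap.adjoint (A j ∘L F (Δ j)) = F (Δ j) ∘L A j := by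
      rw [ContinuousLinearMap.adjoint_comp,
        ContinuousLinearMap.isSelfAdjoint_iff'.mp (hAsa j),
        ContinuousLinearMap.isSelfAdjoint_iff'.mp (hFsa (Δ j))]
    have h0 : (F (Δ j) ∘L A j) ((A i ∘L F (Δ i)) f) = 0 := by
      have := congrArg (fun T : H →L[ℂ] H => T f) (hzero j i (Ne.symm hij))
      simpa using this
    calc ⟪(A i ∘L F (Δ i)) f, (A j ∘L F (Δ j)) f⟫_ℂ
        = ⟪(ContinuousLinearMap.adjoint (A j ∘L F (Δ j))) ((A i ∘L F (Δ i)) f), f⟫_ℂ :=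
          (ContinuousLinearMap.adjoint_inner_left _ f _).symm
      _ = ⟪(F (Δ j) ∘L A j) ((A i ∘L F (Δ i)) f), f⟫_ℂ := by rw [hBadj]
      _ = 0 := by rw [h0, inner_zero_left]
  -- orthogonality of the F (Δ m) f
  have horthF : ∀ i j : Fin n, i ≠ j → ⟪F (Δ i) f, F (Δ j) f⟫_ℂ = 0 := by
    intro i j hij
    have h0 : F (Δ j) (F (Δ i) f) = 0 := by
      have := congrArg (fun T : H →L[ℂ] H => T f) (hFmul (Δ j) (Δ i))
      simp only [ContinuousLinearMap.comp_apply] at this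
      rw [this, hdisj j i (Ne.symm hij), hFempty]
      rfl
    calc ⟪F (Δ i) f, F (Δ j) f⟫_ℂ
        = ⟪(ContinuousLinearMap.adjoint (F (Δ j))) (F (Δ i) f), f⟫_ℂ :=
          (ContinuousLinearMap.adjoint_inner_left _ f _).symm
      _ = ⟪F (Δ j) (F (Δ i) f), f⟫_ℂ := by
          rw [ContinuousLinearMap.isSelfAdjoint_iff'.mp (hFsa (Δ j))]
      _ = 0 := by rw [h0, inner_zero_left]
  -- the partial sum projection
  set P : H →L[ℂ] H := ∑ m : Fin n, F (Δ m) with hP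
  have hPsa : IsSelfAdjoint P := by
    rw [hP]
    show star _ = _
    rw [star_sum]
    exact Finset.sum_congr rfl fun m _ => (hFsa (Δ m)).star_eq
  have hP2 : P * P = P := by
    rw [hP, Finset.sum_mul_sum]
    refine Finset.sum_congr rfl fun i _ => ?_
    rw [Finset.sum_eq_single i]
    · rw [hFmul', Set.inter_self]
    · intro j _ hj
      rw [hFmul', hdisj i j (Ne.symm hj), hFempty]
    · exact fun h => absurd (Finset.mem_univ i) h
  have hPf : ∑ m : Fin n, F (Δ m) f = P f := by
    rw [hP]
    simp [ContinuousLinearMap.sum_apply]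
  have hsumF : ∑ m : Fin n, ‖F (Δ m) f‖ ^ 2 ≤ ‖f‖ ^ 2 := by
    calc ∑ m : Fin n, ‖F (Δ m) f‖ ^ 2 = ‖∑ m : Fin n, F (Δ m) f‖ ^ 2 :=
          (stmt5_pythagoras _ horthF).symm
      _ = ‖P f‖ ^ 2 := by rw [hPf]
      _ ≤ ‖f‖ ^ 2 := pow_le_pow_left₀ (norm_nonneg _) (stmt5_contraction P hPsa hP2 f) 2
  -- norm bound on A m
  have hAnorm : ∀ m : Fin n, ‖A m‖ ≤ M := by
    intro m
    rw [hA]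
    refine norm_cfc_le hM0 fun t ht => ?_
    rw [Real.norm_eq_abs]
    exact hM t (hspec _ (hx m) ht)
  simp only [hAeq]
  constructor
  · exact stmt5_pythagoras (fun m => (A m ∘L F (Δ m)) f) horth
  · calc ∑ m : Fin n, ‖(A m ∘L F (Δ m)) f‖ ^ 2
        ≤ ∑ m : Fin n, M ^ 2 * ‖F (Δ m) f‖ ^ 2 := by
          refine Finset.sum_le_sum fun m _ => ?_
          have h1 : ‖(A m ∘L F (Δ m)) f‖ ≤ M * ‖F (Δ m) f‖ := by
            rw [ContinuousLinearMap.comp_apply]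
            exact le_trans ((A m).le_opNorm _)
              (mul_le_mul_of_nonneg_right (hAnorm m) (norm_nonneg _))
          calc ‖(A m ∘L F (Δ m)) f‖ ^ 2 ≤ (M * ‖F (Δ m) f‖) ^ 2 :=
                pow_le_pow_left₀ (norm_nonneg _) h1 2
            _ = M ^ 2 * ‖F (Δ m) f‖ ^ 2 := by rw [mul_pow]
      _ = M ^ 2 * ∑ m : Fin n, ‖F (Δ m) f‖ ^ 2 := by rw [Finset.mul_sum]
      _ ≤ M ^ 2 * ‖f‖ ^ 2 := mul_le_mul_of_nonneg_left hsumF (sq_nonneg M)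
end
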